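/- Let S be an inverse semigroup with a proper and right subinvariant uniformly discrete extended metric whose components are the L-classes. Then S is quasi-countable: there is a countable subset F of S with S = ⟨F ∪ E⟩, where E is the set of idempotents. -/

import Mathlib

open scoped ENNReal

/-!
Properness turns the metric into countably many finite sets of left translations. Every `s` lies
in the L-class of the idempotent `star s * s` (inverses being unique because idempotents commute),
so it is at finite distance from it and hence `s = f * (star s * s)` for one of these `f`.
-/

section InverseSemigroup

variable {S : Type*} [Semigroup S]

theorem isIdempotentElem_mul_of_mul_mul_eq {a b : S} (h : a * b * a = a) :
    IsIdempotentElem (a * b) := by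
  rw [IsIdempotentElem, ← mul_assoc, h]

theorem isIdempotentElem_mul_of_mul_mul_eq' {a b : S} (h : a * b * a = a) :
    IsIdempotentElem (b * a) := by
  rw [IsIdempotentElem, mul_assoc, ← mul_assoc a, h]

theorem inverse_unique_of_commute_idempotents
    (hcomm : ∀ e f : S, IsIdempotentElem e → IsIdempotentElem f → e * f = f * e)
    {a b c : S} (hab : a * b * a = a) (hba : b * a * b = b)
    (hac : a * c * a = a) (hca : c * a * c = c) : b = c :=
  have hba_idem := isIdempotentElem_mul_of_mul_mul_eq' hab
  have hca_idem := isIdempotentElem_mul_of_mul_mul_eq' hac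
  have hab_idem := isIdempotentElem_mul_of_mul_mul_eq hab
  have hac_idem := isIdempotentElem_mul_of_mul_mul_eq hac
  calc b = b * a * b := hba.symm
    _ = b * (a * c * a) * b := by rw [hac]
    _ = (b * a) * (c * a) * b := by simp only [mul_assoc]
    _ = (c * a) * (b * a) * b := by rw [hcomm _ _ hba_idem hca_idem]
    _ = c * (a * (b * a * b)) := by simp only [mul_assoc]
    _ = c * (a * b) := by rw [hba]
    _ = c * ((a * c * a) * b) := by rw [hac]
    _ = c * ((a * c) * (a * b)) := by simp only [mul_assoc]
    _ = c * ((a * b) * (a * c)) := by rw [hcomm _ _ hab_idem hac_idem]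
    _ = c * (a * b * a) * c := by simp only [mul_assoc]
    _ = c * a * c := by rw [hab]
    _ = c := hca

theorem star_mul_self_of_isIdempotentElem (star : S → S)
    (hinv : ∀ s : S, s * star s * s = s) (hinv2 : ∀ s : S, star s * s * star s = star s)
    (hcomm : ∀ e f : S, IsIdempotentElem e → IsIdempotentElem f → e * f = f * e)
    {e : S} (he : IsIdempotentElem e) : star e * e = e := by
  have hee : e * e * e = e := by rw [he.eq, he.eq]
  rw [inverse_unique_of_commute_idempotents hcomm (hinv e) (hinv2 e) hee hee, he.eq]

end InverseSemigroup

theorem exists_countable_forall_eq_mul_of_proper {S : Type*} [Mul S] (d : S → S → ℝ≥0∞)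
    (hproper : ∀ r : ℝ≥0∞, r ≠ ⊤ →
      ∃ F : Finset S, ∀ x y : S, x ≠ y → d x y ≤ r → ∃ f ∈ F, y = f * x) :
    ∃ F : Set S, F.Countable ∧ ∀ x y : S, x ≠ y → d x y ≠ ⊤ → ∃ f ∈ F, y = f * x := by
  choose G hG using fun n : ℕ => hproper n (ENNReal.natCast_ne_top n)
  refine ⟨⋃ n, (G n : Set S), Set.countable_iUnion fun n => (G n).countable_toSet, ?_⟩
  intro x y hxy hfin
  obtain ⟨n, hn⟩ := ENNReal.exists_nat_gt hfin
  obtain ⟨f, hf, rfl⟩ := hG n x y hxy hn.le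
  exact ⟨f, Set.mem_iUnion.mpr ⟨n, hf⟩, rfl⟩

theorem stmt_14_general {S : Type*} [Semigroup S] (star : S → S)
    (hinv : ∀ s : S, s * star s * s = s)
    (hinv2 : ∀ s : S, star s * s * star s = star s)
    (hcomm : ∀ e f : S, e * e = e → f * f = f → e * f = f * e)
    (d : S → S → ℝ≥0∞)
    (hcomp : ∀ x y : S, d x y ≠ ⊤ ↔ star x * x = star y * y)
    (hproper : ∀ r : ℝ≥0∞, r ≠ ⊤ →
      ∃ F : Finset S, ∀ x y : S, x ≠ y → d x y ≤ r → ∃ f ∈ F, y = f * x) :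
    ∃ F : Set S, F.Countable ∧
      Subsemigroup.closure (F ∪ star '' F ∪ {e : S | e * e = e}) = ⊤ := by
  obtain ⟨F, hF, hFmul⟩ := exists_countable_forall_eq_mul_of_proper d hproper
  refine ⟨F, hF, (Subsemigroup.eq_top_iff' _).mpr fun s => ?_⟩
  set e := star s * s
  have he : IsIdempotentElem e := isIdempotentElem_mul_of_mul_mul_eq' (hinv s)
  have he_mem : e ∈ Subsemigroup.closure (F ∪ star '' F ∪ {e : S | e * e = e}) :=
    Subsemigroup.subset_closure (Or.inr he)
  by_cases hse : e = s
  · exact hse ▸ he_mem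
  have hfin : d e s ≠ ⊤ :=
    (hcomp e s).mpr (star_mul_self_of_isIdempotentElem star hinv hinv2 hcomm he)
  obtain ⟨f, hf, hs⟩ := hFmul e s hse hfin
  rw [hs]
  exact Subsemigroup.mul_mem _ (Subsemigroup.subset_closure (Or.inl (Or.inl hf))) he_mem

/-- An inverse semigroup admitting a proper and right subinvariant uniformly
discrete extended metric whose components are the L-classes is quasi-countable. -/
theorem stmt_14 {S : Type*} [Semigroup S] (star : S → S)
    (hinv : ∀ s : S, s * star s * s = s)
    (hinv2 : ∀ s : S, star s * s * star s = star s)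
    (hcomm : ∀ e f : S, e * e = e → f * f = f → e * f = f * e)
    (d : S → S → ℝ≥0∞)
    (hrefl : ∀ x y : S, d x y = 0 ↔ x = y)
    (hsymm : ∀ x y : S, d x y = d y x)
    (htri : ∀ x y z : S, d x z ≤ d x y + d y z)
    (hcomp : ∀ x y : S, d x y ≠ ⊤ ↔ star x * x = star y * y)
    (hsub : ∀ s t x : S, d (s * x) (t * x) ≤ d s t)
    (hud : ∃ c : ℝ≥0∞, 0 < c ∧ ∀ x y : S, x ≠ y → c < d x y)
    (hproper : ∀ r : ℝ≥0∞, r ≠ ⊤ →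
      ∃ F : Finset S, ∀ x y : S, x ≠ y → d x y ≤ r → ∃ f ∈ F, y = f * x) :
    ∃ F : Set S, F.Countable ∧
      Subsemigroup.closure (F ∪ star '' F ∪ {e : S | e * e = e}) = ⊤ :=
  stmt_14_general star hinv hinv2 hcomm d hcomp hproper
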